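/- Lemma 1 (Binding low-type incentive constraints without loss). Let v be any mechanism satisfying all incentive constraints and the firm break-even condition. Then there exists a mechanism v̄ satisfying all incentive constraints and the firm break-even condition such that, for every t ∈ {2,…,T−1} and every history H^{t−1}, the low-type incentive constraint holds with equality, and the agent's expected payoff under v̄ is no lower than under v. -/

import Mathlib

/-- A policy for Problem IV with horizon `T` and `N` types, for a fixed initial type.
Paths `ω : Fin (T-2) → Fin N` record the type draws at dates `2,…,T-1` (coordinate `s`
is the draw at date `s+2`).  `v t ω` is the date-`t` utility; `adapted` says that for
`t ≤ T-1` it depends only on the draws at dates `2,…,t` (so `v 1` is constant and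
`v T` depends on the draws at dates `2,…,T-1`). -/
structure PolicyIV (T N : ℕ) where
  v : ℕ → (Fin (T - 2) → Fin N) → ℝ
  adapted : ∀ t : ℕ, t ≤ T - 1 → ∀ ω ω' : Fin (T - 2) → Fin N,
    (∀ s : Fin (T - 2), (s : ℕ) + 2 ≤ t → ω s = ω' s) → v t ω = v t ω'

/-- Splice two paths: keep the draws of `ω` at dates `≤ t` and of `ω'` at dates `> t`. -/
def splice (T N : ℕ) (t : ℕ) (ω ω' : Fin (T - 2) → Fin N) : Fin (T - 2) → Fin N :=
  fun s => if (s : ℕ) + 2 ≤ t then ω s else ω' s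

/-- Expectation over paths with i.i.d. coordinate weights `r`. -/
noncomputable def Epath (T N : ℕ) (r : Fin N → ℝ) (f : (Fin (T - 2) → Fin N) → ℝ) : ℝ :=
  ∑ ω : Fin (T - 2) → Fin N, (∏ s, r (ω s)) * f ω

/-- Discounting of date-`t` utility from date 2: `Π_{s=2}^{t-1} δ̃_s`. -/
noncomputable def discIV (T N : ℕ) (δ : Fin N → ℝ) (t : ℕ) (ω : Fin (T - 2) → Fin N) : ℝ :=
  ∏ s : Fin (T - 2), if (s : ℕ) + 2 < t then δ (ω s) else 1

/-- Discounting of date-`τ` utility from date `t+1`: `Π_{s=t+1}^{τ-1} δ̃_s`. -/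
noncomputable def discCont (T N : ℕ) (δ : Fin N → ℝ) (t τ : ℕ) (ω : Fin (T - 2) → Fin N) : ℝ :=
  ∏ s : Fin (T - 2), if t + 1 ≤ (s : ℕ) + 2 ∧ (s : ℕ) + 2 < τ then δ (ω s) else 1

/-- The discount factor realised at date `t` along the path `ω` (for `2 ≤ t ≤ T-1`). -/
noncomputable def deltaAt (T N : ℕ) (δ : Fin N → ℝ) (t : ℕ) (ω : Fin (T - 2) → Fin N) : ℝ :=
  ∏ s : Fin (T - 2), if (s : ℕ) + 2 = t then δ (ω s) else 1

/-- The agent's expected discounted continuation utility from date `t+1` onwards,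
after the history and report recorded in `ω` up to date `t`, with agent beliefs `q`:
`E_A[Σ_{τ=t+1}^T (Π_{s=t+1}^{τ-1} δ̃_s) v_τ]`. -/
noncomputable def contA (T N : ℕ) (δ q : Fin N → ℝ)
    (v : ℕ → (Fin (T - 2) → Fin N) → ℝ) (t : ℕ) (ω : Fin (T - 2) → Fin N) : ℝ :=
  Epath T N q (fun ω' => ∑ τ ∈ Finset.Icc (t + 1) T,
    discCont T N δ t τ (splice T N t ω ω') * v τ (splice T N t ω ω'))

/-- The agent's expected payoff: `v₁ + δ₁·E_A[Σ_{t=2}^T (Π_{s=2}^{t-1} δ̃_s) v_t]`. -/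
noncomputable def payoffIV (T N : ℕ) (δ q : Fin N → ℝ) (δ1 : ℝ) (P : PolicyIV T N) : ℝ :=
  Epath T N q (fun ω => P.v 1 ω + δ1 * ∑ t ∈ Finset.Icc 2 T, discIV T N δ t ω * P.v t ω)

/-- The firm's expected discounted cost: `φ(v₁) + E_F[Σ_{t=2}^T φ(v_t)/R^(t-1)]`. -/
noncomputable def costIV (T N : ℕ) (p : Fin N → ℝ) (φ : ℝ → ℝ) (R : ℝ) (P : PolicyIV T N) : ℝ :=
  Epath T N p (fun ω => φ (P.v 1 ω) + ∑ t ∈ Finset.Icc 2 T, φ (P.v t ω) / R ^ (t - 1))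

/-- All incentive constraints `IC(t,H,δ,δ̂)`: at every date `t ∈ {2,…,T-1}` and after
any history (the common prefix of `ω` and `ω'`), the agent with true date-`t` type
(the date-`t` coordinate of `ω`) prefers its own report to any other report (the
date-`t` coordinate of `ω'`). -/
def ICIV (T N : ℕ) (δ q : Fin N → ℝ) (P : PolicyIV T N) : Prop :=
  ∀ t : ℕ, 2 ≤ t → t ≤ T - 1 → ∀ ω ω' : Fin (T - 2) → Fin N,
    (∀ s : Fin (T - 2), (s : ℕ) + 2 < t → ω s = ω' s) →
    P.v t ω' + deltaAt T N δ t ω * contA T N δ q P.v t ω' ≤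
      P.v t ω + deltaAt T N δ t ω * contA T N δ q P.v t ω

/-- Feasibility for Problem IV: utilities bounded below by `m = u 0`, the firm
break-even condition, and all incentive constraints. -/
def FeasIV (T N : ℕ) (δ p q : Fin N → ℝ) (φ : ℝ → ℝ) (R I m : ℝ) (P : PolicyIV T N) : Prop :=
  (∀ t ∈ Finset.Icc 1 T, ∀ ω, m ≤ P.v t ω) ∧
  costIV T N p φ R P ≤ I ∧ ICIV T N δ q P

/-- In the two-type model of Section 3 the firm believes the agent is always
impatient, so the break-even condition only involves the all-low history
`L^t` (the path `fun _ => 0`): `Σ_{t=1}^T φ(v_t(L^t))/R^(t-1) ≤ I`. -/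
noncomputable def costII (T : ℕ) (φ : ℝ → ℝ) (R : ℝ) (P : PolicyIV T 2) : ℝ :=
  ∑ t ∈ Finset.Icc 1 T, φ (P.v t (fun _ => 0)) / R ^ (t - 1)

/-- Feasibility in Section 3: nonnegative utilities, all incentive constraints
(with types `![δ1, δ2]` and agent beliefs `![q1, q2]`), and firm break-even. -/
def FeasII (T : ℕ) (δ1 δ2 q1 q2 : ℝ) (φ : ℝ → ℝ) (R I : ℝ) (P : PolicyIV T 2) : Prop :=
  (∀ t ∈ Finset.Icc 1 T, ∀ ω, 0 ≤ P.v t ω) ∧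
  ICIV T 2 ![δ1, δ2] ![q1, q2] P ∧
  costII T φ R P ≤ I

/-!
Type `0` is the most impatient. Keep `P` along the all-`0` history, which is all that break-even
sees; after a first report `i ≠ 0` at date `k`, pay nothing until date `T` and then a lump sum
calibrated to make the type-`0` agent at `k` exactly indifferent. Because everything is deferred
to the last date, a type-`i` agent values that lump sum `δ i / δ 0` times as much as type `0`
does, so the type-`0` value `A t` along the all-`0` history obeys `A t = v t + E[δ̃] A (t + 1)`.
Under `P`, the type-`0` incentive constraint at `t + 1` and `v ≥ 0` bound the type-`i`
continuation value by `δ i / δ 0` times the type-`0` one, so the type-`0` value of `P` obeys the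
same recursion with `≤`; at date `1` this is the payoff comparison. The same factor
`δ i / δ 0 ≥ 1` yields the remaining incentive constraints.
-/

open Finset

lemma add_mul_le_div_mul {δ₀ d v c a : ℝ} (hδ₀ : 0 < δ₀) (hd : δ₀ ≤ d) (hv : 0 ≤ v)
    (h : v + δ₀ * c ≤ a) : v + d * c ≤ d / δ₀ * a :=
  calc v + d * c ≤ d / δ₀ * v + d * c := by
        gcongr
        exact le_mul_of_one_le_left hv ((one_le_div hδ₀).2 hd)
    _ = d / δ₀ * (v + δ₀ * c) := by field_simp
    _ ≤ d / δ₀ * a := mul_le_mul_of_nonneg_left h (div_nonneg (hδ₀.le.trans hd) hδ₀.le)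

section Epath

variable {T N : ℕ} (r : Fin N → ℝ)

lemma epath_congr {f g : (Fin (T - 2) → Fin N) → ℝ} (h : ∀ ω, f ω = g ω) :
    Epath T N r f = Epath T N r g := by
  simp only [Epath, h]

lemma epath_add (f g : (Fin (T - 2) → Fin N) → ℝ) :
    Epath T N r (fun ω => f ω + g ω) = Epath T N r f + Epath T N r g := by
  simp only [Epath, mul_add, sum_add_distrib]

lemma epath_const_mul (c : ℝ) (f : (Fin (T - 2) → Fin N) → ℝ) :
    Epath T N r (fun ω => c * f ω) = c * Epath T N r f := by
  simp only [Epath, mul_sum, mul_left_comm]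

lemma epath_nonneg (hr : ∀ i, 0 ≤ r i) {f : (Fin (T - 2) → Fin N) → ℝ} (hf : ∀ ω, 0 ≤ f ω) :
    0 ≤ Epath T N r f :=
  sum_nonneg fun ω _ => mul_nonneg (prod_nonneg fun _ _ => hr _) (hf ω)

variable {r}

lemma epath_const (hr : ∑ i, r i = 1) (c : ℝ) : Epath T N r (fun _ => c) = c := by
  rw [Epath, ← sum_mul, ← Fintype.prod_sum (fun (_ : Fin (T - 2)) i => r i)]
  simp [hr]

lemma prod_update_mul (ω : Fin (T - 2) → Fin N) (s₀ : Fin (T - 2)) (i : Fin N) :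
    (∏ s, r (Function.update ω s₀ i s)) * r (ω s₀) = r i * ∏ s, r (ω s) := by
  rw [← mul_prod_erase univ (fun s => r (Function.update ω s₀ i s)) (mem_univ s₀),
    ← mul_prod_erase univ (fun s => r (ω s)) (mem_univ s₀), Function.update_self,
    prod_congr rfl fun s hs => by rw [Function.update_of_ne (ne_of_mem_erase hs)]]
  ring

/-- Conditioning on the coordinate `s₀`: the map `(ω, i) ↦ (ω[s₀ ↦ i], ω s₀)` is an involution
which, by `prod_update_mul`, carries the summands of the right side to those of the left. -/
lemma epath_eq_sum_update (hr : ∑ i, r i = 1) (s₀ : Fin (T - 2))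
    (f : (Fin (T - 2) → Fin N) → ℝ) :
    Epath T N r f = ∑ i, r i * Epath T N r (fun ω => f (Function.update ω s₀ i)) := by
  let ι : (Fin (T - 2) → Fin N) × Fin N → (Fin (T - 2) → Fin N) × Fin N :=
    fun p => (Function.update p.1 s₀ p.2, p.1 s₀)
  have hι : ι.Involutive := fun p => by simp [ι]
  have key := Fintype.sum_bijective ι hι.bijective
    (fun p => r p.2 * ((∏ s, r (p.1 s)) * f p.1))
    (fun p => r p.2 * ((∏ s, r (p.1 s)) * f (Function.update p.1 s₀ p.2)))
    fun p => by
      simp only [ι, Function.update_idem, Function.update_eq_self]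
      linear_combination -f p.1 * prod_update_mul p.1 s₀ p.2
  simp only [Epath, mul_sum]
  rw [sum_comm, ← Fintype.sum_prod_type', ← key, Fintype.sum_prod_type]
  exact sum_congr rfl fun ω _ => by simp only [← sum_mul, hr, one_mul]

end Epath

section Continuation

variable {T N : ℕ} {δ q : Fin N → ℝ}

lemma splice_of_le {t : ℕ} (ω ω' : Fin (T - 2) → Fin N) {s : Fin (T - 2)} (hs : (s : ℕ) + 2 ≤ t) :
    splice T N t ω ω' s = ω s := if_pos hs

lemma splice_of_lt {t : ℕ} (ω ω' : Fin (T - 2) → Fin N) {s : Fin (T - 2)} (hs : t < (s : ℕ) + 2) :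
    splice T N t ω ω' s = ω' s := if_neg (by omega)

lemma splice_update {t : ℕ} (ω ω' : Fin (T - 2) → Fin N) {s₀ : Fin (T - 2)}
    (hs₀ : (s₀ : ℕ) + 2 = t + 1) (i : Fin N) :
    splice T N t ω (Function.update ω' s₀ i) = splice T N (t + 1) (Function.update ω s₀ i) ω' := by
  funext s
  rcases eq_or_ne s s₀ with rfl | hs
  · rw [splice_of_lt _ _ (by omega), splice_of_le _ _ hs₀.le, Function.update_self,
      Function.update_self]
  · have : (s : ℕ) ≠ s₀ := Fin.val_ne_of_ne hs
    simp only [splice, Function.update_of_ne hs]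
    split_ifs <;> omega

lemma deltaAt_eq {t : ℕ} (ω : Fin (T - 2) → Fin N) {s₀ : Fin (T - 2)} (hs₀ : (s₀ : ℕ) + 2 = t) :
    deltaAt T N δ t ω = δ (ω s₀) := by
  rw [deltaAt, prod_eq_single s₀ (fun s _ hs => if_neg fun h => hs (Fin.ext (by omega)))
    (by simp), if_pos hs₀]

lemma discCont_of_le {t τ : ℕ} (ω : Fin (T - 2) → Fin N) (hτ : τ ≤ t + 1) :
    discCont T N δ t τ ω = 1 :=
  prod_eq_one fun _ _ => if_neg (by omega)

lemma discCont_eq_deltaAt_mul {t τ : ℕ} (ω : Fin (T - 2) → Fin N) (hτ : t + 1 < τ) :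
    discCont T N δ t τ ω = deltaAt T N δ (t + 1) ω * discCont T N δ (t + 1) τ ω := by
  rw [discCont, discCont, deltaAt, ← prod_mul_distrib]
  refine prod_congr rfl fun s _ => ?_
  split_ifs <;> first | omega | ring

lemma contA_congr (v : ℕ → (Fin (T - 2) → Fin N) → ℝ) {t : ℕ} {ω ω' : Fin (T - 2) → Fin N}
    (h : ∀ s : Fin (T - 2), (s : ℕ) + 2 ≤ t → ω s = ω' s) :
    contA T N δ q v t ω = contA T N δ q v t ω' := by
  have : ∀ ω'', splice T N t ω ω'' = splice T N t ω' ω'' := fun ω'' => funext fun s => by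
    by_cases hs : (s : ℕ) + 2 ≤ t
    · rw [splice_of_le _ _ hs, splice_of_le _ _ hs, h s hs]
    · rw [splice_of_lt _ _ (by omega), splice_of_lt _ _ (by omega)]
  simp only [contA, this]

lemma contA_nonneg (hδ : ∀ i, 0 ≤ δ i) (hq : ∀ i, 0 ≤ q i) (v : ℕ → (Fin (T - 2) → Fin N) → ℝ)
    {t : ℕ} (hv : ∀ τ, t + 1 ≤ τ → τ ≤ T → ∀ ω, 0 ≤ v τ ω) (ω : Fin (T - 2) → Fin N) :
    0 ≤ contA T N δ q v t ω := by
  refine epath_nonneg q hq fun ω' => sum_nonneg fun τ hτ => mul_nonneg ?_ ?_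
  · exact prod_nonneg fun s _ => by split_ifs <;> simp [hδ]
  · exact hv τ (mem_Icc.1 hτ).1 (mem_Icc.1 hτ).2 _

lemma contA_pred (hq : ∑ i, q i = 1) (hT : 0 < T) (v : ℕ → (Fin (T - 2) → Fin N) → ℝ)
    (ω : Fin (T - 2) → Fin N) : contA T N δ q v (T - 1) ω = v T ω := by
  have hsplice : ∀ ω', splice T N (T - 1) ω ω' = ω := fun ω' =>
    funext fun s => splice_of_le _ _ (by omega)
  have hIcc : Icc (T - 1 + 1) T = {T} := by rw [Nat.sub_add_cancel hT, Icc_self]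
  simp only [contA, hsplice, hIcc, sum_singleton, discCont_of_le ω (by omega : T ≤ T - 1 + 1),
    one_mul, epath_const hq]

/-- Bellman recursion: condition on the report at date `t + 1`. -/
lemma contA_eq_sum (hq : ∑ i, q i = 1) (P : PolicyIV T N) {t : ℕ} (ω : Fin (T - 2) → Fin N)
    {s₀ : Fin (T - 2)} (hs₀ : (s₀ : ℕ) + 2 = t + 1) :
    contA T N δ q P.v t ω = ∑ i, q i * (P.v (t + 1) (Function.update ω s₀ i) +
      δ i * contA T N δ q P.v (t + 1) (Function.update ω s₀ i)) := by
  unfold contA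
  rw [epath_eq_sum_update hq s₀]
  refine sum_congr rfl fun i _ => congrArg (q i * ·) ?_
  rw [← epath_const (T := T) hq (P.v (t + 1) (Function.update ω s₀ i)), ← epath_const_mul,
    ← epath_add]
  refine epath_congr q fun ω' => ?_
  set Y := splice T N (t + 1) (Function.update ω s₀ i) ω' with hY_def
  have hY : Y s₀ = i := by rw [hY_def, splice_of_le _ _ hs₀.le, Function.update_self]
  rw [splice_update ω ω' hs₀, ← insert_Icc_add_one_left_eq_Icc (by omega : t + 1 ≤ T),
    sum_insert (by simp), discCont_of_le Y le_rfl, one_mul, mul_sum,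
    P.adapted (t + 1) (by omega) Y _ fun s hs => splice_of_le _ _ hs]
  refine congrArg _ (sum_congr rfl fun τ hτ => ?_)
  rw [discCont_eq_deltaAt_mul Y (by simp at hτ; omega), deltaAt_eq Y hs₀, hY, mul_assoc]

lemma payoffIV_eq (hq : ∑ i, q i = 1) (hT : 2 ≤ T) (d : ℝ) (P : PolicyIV T N)
    (ω₀ : Fin (T - 2) → Fin N) :
    payoffIV T N δ q d P = P.v 1 ω₀ + d * contA T N δ q P.v 1 ω₀ := by
  have hv₁ : ∀ ω, P.v 1 ω = P.v 1 ω₀ := fun ω => P.adapted 1 (by omega) _ _ fun s hs => by omega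
  have hsplice : ∀ ω, splice T N 1 ω₀ ω = ω := fun ω => funext fun s => splice_of_lt _ _ (by omega)
  have hdisc : ∀ τ ω, discCont T N δ 1 τ ω = discIV T N δ τ ω := fun τ ω =>
    prod_congr rfl fun s _ => if_congr (by omega) rfl rfl
  simp only [payoffIV, contA, hv₁, hsplice, hdisc]
  rw [epath_add, epath_const hq, epath_const_mul]

end Continuation

section BindingPolicy

variable {T N : ℕ} [NeZero N]

def LowUpTo (t : ℕ) (ω : Fin (T - 2) → Fin N) : Prop :=
  ∀ s : Fin (T - 2), (s : ℕ) + 2 ≤ t → ω s = 0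

noncomputable def highDate (ω : Fin (T - 2) → Fin N) : ℕ :=
  sInf {k | ¬ LowUpTo k ω}

lemma LowUpTo.mono {k t : ℕ} {ω : Fin (T - 2) → Fin N} (h : LowUpTo t ω) (hk : k ≤ t) :
    LowUpTo k ω :=
  fun s hs => h s (hs.trans hk)

lemma lowUpTo_zero (t : ℕ) : LowUpTo t (0 : Fin (T - 2) → Fin N) := fun _ _ => rfl

lemma lowUpTo_congr {t : ℕ} {ω ω' : Fin (T - 2) → Fin N}
    (h : ∀ s : Fin (T - 2), (s : ℕ) + 2 ≤ t → ω s = ω' s) : LowUpTo t ω ↔ LowUpTo t ω' :=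
  forall_congr' fun s => imp_congr_right fun hs => by rw [h s hs]

lemma exists_highDate_eq {t : ℕ} {ω : Fin (T - 2) → Fin N} (h : ¬ LowUpTo t ω) :
    ∃ s : Fin (T - 2), ω s ≠ 0 ∧ (s : ℕ) + 2 ≤ t ∧ highDate ω = s + 2 := by
  have hmem : highDate ω ∈ {k | ¬ LowUpTo k ω} := Nat.sInf_mem ⟨t, h⟩
  obtain ⟨s, hs, hωs⟩ : ∃ s : Fin (T - 2), (s : ℕ) + 2 ≤ highDate ω ∧ ω s ≠ 0 := by
    simpa [LowUpTo] using hmem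
  have hle : highDate ω ≤ s + 2 := Nat.sInf_le fun hlow => hωs (hlow s le_rfl)
  exact ⟨s, hωs, (le_antisymm hs hle).symm ▸ Nat.sInf_le h, le_antisymm hle hs⟩

lemma highDate_eq {t : ℕ} {ω : Fin (T - 2) → Fin N} (h₁ : LowUpTo (t - 1) ω)
    (h₂ : ¬ LowUpTo t ω) : highDate ω = t := by
  obtain ⟨s, hωs, hs, hdate⟩ := exists_highDate_eq h₂
  have : t - 1 < (s : ℕ) + 2 := by
    by_contra! hle
    exact hωs (h₁ s hle)
  omega

lemma highDate_congr {t : ℕ} {ω ω' : Fin (T - 2) → Fin N} (hω : ¬ LowUpTo t ω)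
    (h : ∀ s : Fin (T - 2), (s : ℕ) + 2 ≤ t → ω s = ω' s) : highDate ω = highDate ω' := by
  have hω' : ¬ LowUpTo t ω' := (lowUpTo_congr h).not.1 hω
  unfold highDate
  congr 1
  ext k
  rcases le_total k t with hk | hk
  · exact (lowUpTo_congr fun s hs => h s (hs.trans hk)).not
  · exact iff_of_true (fun hlow => hω (hlow.mono hk)) (fun hlow => hω' (hlow.mono hk))

def meanDiscount (δ q : Fin N → ℝ) : ℝ := ∑ i, q i * δ i

lemma meanDiscount_pos {δ q : Fin N → ℝ} (hδ₀ : 0 < δ 0) (hδ : ∀ i, δ 0 ≤ δ i)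
    (hq : ∀ i, 0 ≤ q i) (hqsum : ∑ i, q i = 1) : 0 < meanDiscount δ q :=
  calc 0 < δ 0 := hδ₀
    _ = ∑ i, q i * δ 0 := by rw [← sum_mul, hqsum, one_mul]
    _ ≤ meanDiscount δ q := sum_le_sum fun i _ => mul_le_mul_of_nonneg_left (hδ i) (hq i)

lemma mul_sum_div_mul {δ q : Fin N → ℝ} (hδ₀ : δ 0 ≠ 0) (a : ℝ) :
    δ 0 * ∑ i, q i * (δ i / δ 0 * a) = meanDiscount δ q * a := by
  rw [meanDiscount, mul_sum, sum_mul]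
  exact sum_congr rfl fun i _ => by field_simp

/-- The value at date `t` of the most impatient type along the all-`0` history under
`bindingPolicy`, and an upper bound for it under any incentive compatible `P`. -/
noncomputable def lowValue (δ q : Fin N → ℝ) (P : PolicyIV T N) (t : ℕ) : ℝ :=
  if t < T - 1 then P.v t 0 + meanDiscount δ q * lowValue δ q P (t + 1)
  else P.v (T - 1) 0 + δ 0 * P.v T 0
termination_by T - 1 - t

lemma lowValue_of_lt {δ q : Fin N → ℝ} (P : PolicyIV T N) {t : ℕ} (ht : t < T - 1) :
    lowValue δ q P t = P.v t 0 + meanDiscount δ q * lowValue δ q P (t + 1) := by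
  rw [lowValue, if_pos ht]

lemma lowValue_pred {δ q : Fin N → ℝ} (P : PolicyIV T N) :
    lowValue δ q P (T - 1) = P.v (T - 1) 0 + δ 0 * P.v T 0 := by
  rw [lowValue, if_neg (by omega)]

/-- Date-`T` reward after a first non-`0` report at date `k`, calibrated so that the most
impatient type is indifferent at date `k`. -/
noncomputable def bindingReward (δ q : Fin N → ℝ) (P : PolicyIV T N) (k : ℕ) : ℝ :=
  lowValue δ q P k / (δ 0 * meanDiscount δ q ^ (T - 1 - k))

open Classical in
noncomputable def bindingPolicy (δ q : Fin N → ℝ) (P : PolicyIV T N) : PolicyIV T N where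
  v t ω := if LowUpTo t ω then P.v t 0 else if t = T then bindingReward δ q P (highDate ω) else 0
  adapted t ht ω ω' h := by
    by_cases hlow : LowUpTo t ω
    · simp only [if_pos hlow, if_pos ((lowUpTo_congr h).1 hlow)]
    · obtain ⟨s, -, hs, -⟩ := exists_highDate_eq hlow
      simp only [if_neg hlow, if_neg ((lowUpTo_congr h).not.1 hlow), if_neg (by omega : t ≠ T)]

variable {δ q : Fin N → ℝ} {P : PolicyIV T N}

lemma bindingPolicy_v_of_lowUpTo {t : ℕ} {ω : Fin (T - 2) → Fin N} (h : LowUpTo t ω) :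
    (bindingPolicy δ q P).v t ω = P.v t 0 :=
  if_pos h

lemma bindingPolicy_v_of_not_lowUpTo {t : ℕ} {ω : Fin (T - 2) → Fin N} (h : ¬ LowUpTo t ω)
    (ht : t ≠ T) : (bindingPolicy δ q P).v t ω = 0 := by
  simp only [bindingPolicy, if_neg h, if_neg ht]

lemma bindingPolicy_v_last {ω : Fin (T - 2) → Fin N} (h : ¬ LowUpTo T ω) :
    (bindingPolicy δ q P).v T ω = bindingReward δ q P (highDate ω) := by
  simp only [bindingPolicy, if_neg h, if_true]

lemma contA_bindingPolicy_of_not_lowUpTo (hqsum : ∑ i, q i = 1) {t : ℕ} (ht : t ≤ T - 1)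
    {ω : Fin (T - 2) → Fin N} (hω : ¬ LowUpTo t ω) :
    contA T N δ q (bindingPolicy δ q P).v t ω =
      bindingReward δ q P (highDate ω) * meanDiscount δ q ^ (T - 1 - t) := by
  induction ht using Nat.decreasingInduction generalizing ω with
  | self =>
    obtain ⟨s, -, hs, -⟩ := exists_highDate_eq hω
    rw [contA_pred hqsum (by omega), bindingPolicy_v_last fun h => hω (h.mono (by omega)),
      Nat.sub_self, pow_zero, mul_one]
  | of_succ t ht ih =>
    obtain ⟨s, -, hs, -⟩ := exists_highDate_eq hω
    let s₀ : Fin (T - 2) := ⟨t - 1, by omega⟩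
    have hs₀ : (s₀ : ℕ) + 2 = t + 1 := by simp only [s₀]; omega
    have hagree (i : Fin N) : ∀ s : Fin (T - 2), (s : ℕ) + 2 ≤ t →
        ω s = Function.update ω s₀ i s := fun s hs =>
      (Function.update_of_ne (fun h => by subst h; omega) _ _).symm
    have hhigh (i : Fin N) : ¬ LowUpTo (t + 1) (Function.update ω s₀ i) := fun h =>
      hω ((lowUpTo_congr (hagree i)).2 (h.mono t.le_succ))
    calc contA T N δ q (bindingPolicy δ q P).v t ω
        = ∑ i, q i * δ i * (bindingReward δ q P (highDate ω) *
            meanDiscount δ q ^ (T - 1 - (t + 1))) := by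
          rw [contA_eq_sum hqsum _ ω hs₀]
          refine sum_congr rfl fun i _ => ?_
          rw [bindingPolicy_v_of_not_lowUpTo (hhigh i) (by omega),
            ih (hhigh i), ← highDate_congr hω (hagree i)]
          ring
      _ = bindingReward δ q P (highDate ω) * meanDiscount δ q ^ (T - 1 - t) := by
          rw [← sum_mul, ← meanDiscount, show T - 1 - t = T - 1 - (t + 1) + 1 by omega, pow_succ]
          ring

lemma contA_bindingPolicy_of_highDate_eq (hδ₀ : δ 0 ≠ 0) (hm : meanDiscount δ q ≠ 0)
    (hqsum : ∑ i, q i = 1) {t : ℕ} (ht : t ≤ T - 1) {ω : Fin (T - 2) → Fin N}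
    (hω : ¬ LowUpTo t ω) (hdate : highDate ω = t) :
    δ 0 * contA T N δ q (bindingPolicy δ q P).v t ω = lowValue δ q P t := by
  rw [contA_bindingPolicy_of_not_lowUpTo hqsum ht hω, hdate, bindingReward]
  field_simp

lemma lowUpTo_update_zero {t : ℕ} {s₀ : Fin (T - 2)} (hs₀ : (s₀ : ℕ) + 2 = t + 1) (i : Fin N) :
    LowUpTo t (Function.update 0 s₀ i) := fun s hs =>
  Function.update_of_ne (fun h => by subst h; omega) _ _

lemma add_contA_bindingPolicy_zero (hδ₀ : δ 0 ≠ 0) (hm : meanDiscount δ q ≠ 0)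
    (hqsum : ∑ i, q i = 1) {t : ℕ} (ht₁ : 1 ≤ t) (ht : t ≤ T - 1) :
    P.v t 0 + δ 0 * contA T N δ q (bindingPolicy δ q P).v t 0 = lowValue δ q P t := by
  induction ht using Nat.decreasingInduction with
  | self =>
    rw [contA_pred hqsum (by omega), bindingPolicy_v_of_lowUpTo (lowUpTo_zero T), lowValue_pred]
  | of_succ t ht ih =>
    let s₀ : Fin (T - 2) := ⟨t - 1, by omega⟩
    have hs₀ : (s₀ : ℕ) + 2 = t + 1 := by simp only [s₀]; omega
    have hterm (i : Fin N) : (bindingPolicy δ q P).v (t + 1) (Function.update 0 s₀ i) +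
        δ i * contA T N δ q (bindingPolicy δ q P).v (t + 1) (Function.update 0 s₀ i) =
        δ i / δ 0 * lowValue δ q P (t + 1) := by
      rcases eq_or_ne i 0 with rfl | hi
      · have h0 : Function.update (0 : Fin (T - 2) → Fin N) s₀ 0 = 0 :=
          Function.update_eq_self_iff.2 rfl
        rw [h0, bindingPolicy_v_of_lowUpTo (lowUpTo_zero _),
          div_self hδ₀, one_mul, ih (by omega)]
      · have hhigh : ¬ LowUpTo (t + 1) (Function.update (0 : Fin (T - 2) → Fin N) s₀ i) :=
          fun h => hi (by simpa using h s₀ hs₀.le)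
        rw [bindingPolicy_v_of_not_lowUpTo hhigh (by omega), zero_add,
          ← contA_bindingPolicy_of_highDate_eq hδ₀ hm hqsum (t := t + 1) ht hhigh
            (highDate_eq (lowUpTo_update_zero hs₀ i) hhigh)]
        field_simp
    rw [contA_eq_sum hqsum _ 0 hs₀, sum_congr rfl fun i _ => congrArg (q i * ·) (hterm i),
      mul_sum_div_mul hδ₀, lowValue_of_lt P ht]

lemma add_contA_le_lowValue (hδ₀ : 0 < δ 0) (hδ : ∀ i, δ 0 ≤ δ i) (hq : ∀ i, 0 ≤ q i)
    (hqsum : ∑ i, q i = 1) (hP : ∀ t ∈ Icc 1 T, ∀ ω, 0 ≤ P.v t ω) (hIC : ICIV T N δ q P)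
    {t : ℕ} (ht₁ : 1 ≤ t) (ht : t ≤ T - 1) :
    P.v t 0 + δ 0 * contA T N δ q P.v t 0 ≤ lowValue δ q P t := by
  induction ht using Nat.decreasingInduction with
  | self => rw [contA_pred hqsum (by omega), lowValue_pred]
  | of_succ t ht ih =>
    let s₀ : Fin (T - 2) := ⟨t - 1, by omega⟩
    have hs₀ : (s₀ : ℕ) + 2 = t + 1 := by simp only [s₀]; omega
    have hterm (i : Fin N) : P.v (t + 1) (Function.update 0 s₀ i) +
        δ i * contA T N δ q P.v (t + 1) (Function.update 0 s₀ i) ≤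
        δ i / δ 0 * lowValue δ q P (t + 1) := by
      have hlowIC := hIC (t + 1) (by omega) (by omega) 0 (Function.update 0 s₀ i)
        fun s hs => (lowUpTo_update_zero hs₀ i s (by omega)).symm
      rw [deltaAt_eq _ hs₀] at hlowIC
      calc _ ≤ δ i / δ 0 * (P.v (t + 1) 0 + δ 0 * contA T N δ q P.v (t + 1) 0) :=
            add_mul_le_div_mul hδ₀ (hδ i) (hP _ (mem_Icc.2 ⟨by omega, by omega⟩) _) hlowIC
        _ ≤ δ i / δ 0 * lowValue δ q P (t + 1) :=
            mul_le_mul_of_nonneg_left (ih (by omega))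
              (div_nonneg (hδ₀.le.trans (hδ i)) hδ₀.le)
    calc P.v t 0 + δ 0 * contA T N δ q P.v t 0
        ≤ P.v t 0 + δ 0 * ∑ i, q i * (δ i / δ 0 * lowValue δ q P (t + 1)) := by
          rw [contA_eq_sum hqsum P 0 hs₀]
          gcongr with i
          exacts [hq i, hterm i]
      _ = lowValue δ q P t := by rw [mul_sum_div_mul hδ₀.ne', lowValue_of_lt P ht]

lemma bindingReward_nonneg (hδ₀ : 0 < δ 0) (hδ : ∀ i, δ 0 ≤ δ i) (hq : ∀ i, 0 ≤ q i)
    (hqsum : ∑ i, q i = 1) (hP : ∀ t ∈ Icc 1 T, ∀ ω, 0 ≤ P.v t ω) (hIC : ICIV T N δ q P)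
    {k : ℕ} (hk₁ : 1 ≤ k) (hk : k ≤ T - 1) : 0 ≤ bindingReward δ q P k := by
  have hcont : 0 ≤ contA T N δ q P.v k 0 :=
    contA_nonneg (fun i => hδ₀.le.trans (hδ i)) hq P.v
      (fun τ _ hτ ω => hP τ (mem_Icc.2 ⟨by omega, hτ⟩) ω) 0
  have hvalue := add_contA_le_lowValue hδ₀ hδ hq hqsum hP hIC hk₁ hk
  have hv := hP k (mem_Icc.2 ⟨hk₁, by omega⟩) 0
  refine div_nonneg ((add_nonneg hv (mul_nonneg hδ₀.le hcont)).trans hvalue)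
    (mul_nonneg hδ₀.le (pow_nonneg ?_ _))
  exact (meanDiscount_pos hδ₀ hδ hq hqsum).le

lemma bindingPolicy_nonneg (hδ₀ : 0 < δ 0) (hδ : ∀ i, δ 0 ≤ δ i) (hq : ∀ i, 0 ≤ q i)
    (hqsum : ∑ i, q i = 1) (hP : ∀ t ∈ Icc 1 T, ∀ ω, 0 ≤ P.v t ω) (hIC : ICIV T N δ q P) :
    ∀ t ∈ Icc 1 T, ∀ ω, 0 ≤ (bindingPolicy δ q P).v t ω := by
  intro t ht ω
  simp only [bindingPolicy]
  split_ifs with hlow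
  · exact hP t ht 0
  · obtain ⟨s, -, -, hdate⟩ := exists_highDate_eq hlow
    exact hdate ▸ bindingReward_nonneg hδ₀ hδ hq hqsum hP hIC (by omega) (by omega)
  · exact le_rfl

lemma add_contA_bindingPolicy_of_lowUpTo_pred (hδ₀ : δ 0 ≠ 0) (hm : meanDiscount δ q ≠ 0)
    (hqsum : ∑ i, q i = 1) {t : ℕ} (ht₁ : 1 ≤ t) (ht : t ≤ T - 1) {ω : Fin (T - 2) → Fin N}
    (hω : LowUpTo (t - 1) ω) :
    (bindingPolicy δ q P).v t ω + δ 0 * contA T N δ q (bindingPolicy δ q P).v t ω =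
      lowValue δ q P t := by
  by_cases hlow : LowUpTo t ω
  · rw [bindingPolicy_v_of_lowUpTo hlow, contA_congr _ fun s hs => hlow s hs]
    exact add_contA_bindingPolicy_zero hδ₀ hm hqsum ht₁ ht
  · obtain ⟨s, -, hs, -⟩ := exists_highDate_eq hlow
    rw [bindingPolicy_v_of_not_lowUpTo hlow (by omega), zero_add,
      contA_bindingPolicy_of_highDate_eq hδ₀ hm hqsum ht hlow (highDate_eq hω hlow)]

lemma bindingPolicy_v_contA_eq_of_not_lowUpTo (hqsum : ∑ i, q i = 1) {t : ℕ} (ht : t ≤ T - 1)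
    {ω ω' : Fin (T - 2) → Fin N} (hω : ¬ LowUpTo (t - 1) ω)
    (h : ∀ s : Fin (T - 2), (s : ℕ) + 2 < t → ω s = ω' s) :
    (bindingPolicy δ q P).v t ω = (bindingPolicy δ q P).v t ω' ∧
      contA T N δ q (bindingPolicy δ q P).v t ω = contA T N δ q (bindingPolicy δ q P).v t ω' := by
  have h' : ∀ s : Fin (T - 2), (s : ℕ) + 2 ≤ t - 1 → ω s = ω' s := fun s hs => h s (by omega)
  have hω' : ¬ LowUpTo (t - 1) ω' := (lowUpTo_congr h').not.1 hω
  obtain ⟨s, -, hs, -⟩ := exists_highDate_eq hω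
  have hnt : ¬ LowUpTo t ω := fun hl => hω (hl.mono (Nat.sub_le t 1))
  have hnt' : ¬ LowUpTo t ω' := fun hl => hω' (hl.mono (Nat.sub_le t 1))
  refine ⟨?_, ?_⟩
  · rw [bindingPolicy_v_of_not_lowUpTo hnt (by omega),
      bindingPolicy_v_of_not_lowUpTo hnt' (by omega)]
  · rw [contA_bindingPolicy_of_not_lowUpTo hqsum ht hnt,
      contA_bindingPolicy_of_not_lowUpTo hqsum ht hnt', highDate_congr hω h']

theorem bindingPolicy_low_indifferent (hδ₀ : δ 0 ≠ 0) (hm : meanDiscount δ q ≠ 0)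
    (hqsum : ∑ i, q i = 1) {t : ℕ} (ht₁ : 1 ≤ t) (ht : t ≤ T - 1) {ω ω' : Fin (T - 2) → Fin N}
    (h : ∀ s : Fin (T - 2), (s : ℕ) + 2 < t → ω s = ω' s) :
    (bindingPolicy δ q P).v t ω + δ 0 * contA T N δ q (bindingPolicy δ q P).v t ω =
      (bindingPolicy δ q P).v t ω' + δ 0 * contA T N δ q (bindingPolicy δ q P).v t ω' := by
  by_cases hω : LowUpTo (t - 1) ω
  · have hω' : LowUpTo (t - 1) ω' := (lowUpTo_congr fun s hs => h s (by omega)).1 hω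
    rw [add_contA_bindingPolicy_of_lowUpTo_pred hδ₀ hm hqsum ht₁ ht hω,
      add_contA_bindingPolicy_of_lowUpTo_pred hδ₀ hm hqsum ht₁ ht hω']
  · obtain ⟨hv, hc⟩ := bindingPolicy_v_contA_eq_of_not_lowUpTo hqsum ht hω h
    rw [hv, hc]

theorem icIV_bindingPolicy (hδ₀ : 0 < δ 0) (hδ : ∀ i, δ 0 ≤ δ i) (hq : ∀ i, 0 ≤ q i)
    (hqsum : ∑ i, q i = 1) (hP : ∀ t ∈ Icc 1 T, ∀ ω, 0 ≤ P.v t ω) (hIC : ICIV T N δ q P) :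
    ICIV T N δ q (bindingPolicy δ q P) := by
  intro t ht₂ ht ω ω' h
  have hm := (meanDiscount_pos hδ₀ hδ hq hqsum).ne'
  let s₀ : Fin (T - 2) := ⟨t - 2, by omega⟩
  have hs₀ : (s₀ : ℕ) + 2 = t := by simp only [s₀]; omega
  rw [deltaAt_eq ω hs₀]
  by_cases hω : LowUpTo (t - 1) ω
  · have hω' : LowUpTo (t - 1) ω' := (lowUpTo_congr fun s hs => h s (by omega)).1 hω
    have hV := add_contA_bindingPolicy_of_lowUpTo_pred (P := P) hδ₀.ne' hm hqsum (by omega) ht hω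
    have hV' := add_contA_bindingPolicy_of_lowUpTo_pred (P := P) hδ₀.ne' hm hqsum (by omega) ht hω'
    rcases eq_or_ne (ω s₀) 0 with h0 | h0
    · rw [h0]
      linarith
    · have hlow : ¬ LowUpTo t ω := fun hl => h0 (hl s₀ hs₀.le)
      rw [bindingPolicy_v_of_not_lowUpTo hlow (by omega), zero_add] at hV ⊢
      calc _ ≤ δ (ω s₀) / δ 0 * ((bindingPolicy δ q P).v t ω' +
              δ 0 * contA T N δ q (bindingPolicy δ q P).v t ω') :=
            add_mul_le_div_mul hδ₀ (hδ _)
              (bindingPolicy_nonneg hδ₀ hδ hq hqsum hP hIC t (mem_Icc.2 ⟨by omega, by omega⟩) ω')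
              le_rfl
        _ = δ (ω s₀) * contA T N δ q (bindingPolicy δ q P).v t ω := by
            rw [hV', ← hV]
            field_simp
  · obtain ⟨hv, hc⟩ := bindingPolicy_v_contA_eq_of_not_lowUpTo hqsum ht hω h
    rw [hv, hc]

theorem payoffIV_le_bindingPolicy (hT : 2 ≤ T) (hδ₀ : 0 < δ 0) (hδ : ∀ i, δ 0 ≤ δ i)
    (hq : ∀ i, 0 ≤ q i) (hqsum : ∑ i, q i = 1) (hP : ∀ t ∈ Icc 1 T, ∀ ω, 0 ≤ P.v t ω)
    (hIC : ICIV T N δ q P) :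
    payoffIV T N δ q (δ 0) P ≤ payoffIV T N δ q (δ 0) (bindingPolicy δ q P) := by
  rw [payoffIV_eq hqsum hT _ P 0, payoffIV_eq hqsum hT _ _ 0,
    bindingPolicy_v_of_lowUpTo (lowUpTo_zero 1),
    add_contA_bindingPolicy_zero hδ₀.ne' (meanDiscount_pos hδ₀ hδ hq hqsum).ne' hqsum le_rfl
      (by omega)]
  exact add_contA_le_lowValue hδ₀ hδ hq hqsum hP hIC le_rfl (by omega)

end BindingPolicy

theorem stmt6_general
    (T : ℕ) (hT : 3 ≤ T)
    (R I : ℝ)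
    (φ : ℝ → ℝ)
    (δ1 δ2 q1 q2 : ℝ) (hδ1 : 0 < δ1) (hδ12 : δ1 < δ2)
    (hq1 : 0 < q1) (hq2 : 0 < q2) (hqsum : q1 + q2 = 1)
    (P : PolicyIV T 2)
    (hP : FeasII T δ1 δ2 q1 q2 φ R I P) :
    ∃ Q : PolicyIV T 2,
      FeasII T δ1 δ2 q1 q2 φ R I Q ∧
      -- the low-type incentive constraints hold with equality
      (∀ t : ℕ, 2 ≤ t → t ≤ T - 1 → ∀ ω ω' : Fin (T - 2) → Fin 2,
        (∀ s : Fin (T - 2), (s : ℕ) + 2 < t → ω s = ω' s) →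
        (∀ s : Fin (T - 2), (s : ℕ) + 2 = t → ω s = 0 ∧ ω' s = 1) →
        Q.v t ω + δ1 * contA T 2 ![δ1, δ2] ![q1, q2] Q.v t ω =
          Q.v t ω' + δ1 * contA T 2 ![δ1, δ2] ![q1, q2] Q.v t ω') ∧
      -- the agent's expected payoff is no lower
      payoffIV T 2 ![δ1, δ2] ![q1, q2] δ1 P ≤
        payoffIV T 2 ![δ1, δ2] ![q1, q2] δ1 Q := by
  obtain ⟨hPnn, hPIC, hPcost⟩ := hP
  have hδ : ∀ i, ![δ1, δ2] 0 ≤ ![δ1, δ2] i := Fin.forall_fin_two.2 ⟨le_rfl, hδ12.le⟩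
  have hq : ∀ i, 0 ≤ ![q1, q2] i := Fin.forall_fin_two.2 ⟨hq1.le, hq2.le⟩
  have hsum : ∑ i, ![q1, q2] i = 1 := by simpa [Fin.sum_univ_two] using hqsum
  have hm := meanDiscount_pos hδ1 hδ hq hsum
  refine ⟨bindingPolicy ![δ1, δ2] ![q1, q2] P,
    ⟨bindingPolicy_nonneg hδ1 hδ hq hsum hPnn hPIC,
      icIV_bindingPolicy hδ1 hδ hq hsum hPnn hPIC, ?_⟩,
    fun t ht₂ ht ω ω' h _ =>
      bindingPolicy_low_indifferent hδ1.ne' hm.ne' hsum (by omega) ht h,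
    payoffIV_le_bindingPolicy (by omega) hδ1 hδ hq hsum hPnn hPIC⟩
  calc costII T φ R (bindingPolicy ![δ1, δ2] ![q1, q2] P) = costII T φ R P :=
        sum_congr rfl fun t _ =>
          congrArg (φ · / R ^ (t - 1)) (bindingPolicy_v_of_lowUpTo (lowUpTo_zero t))
    _ ≤ I := hPcost

/-- Lemma 1 (binding low-type incentive constraints without loss).
For every mechanism `P` satisfying all incentive constraints and the firm break-even
condition, there is a mechanism `Q` satisfying the same constraints such that every
low-type incentive constraint holds with equality (at every date `t ∈ {2,…,T-1}` and
every history, where `ω` has the low type at date `t` and `ω'` the high type, with a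
common prefix), and the agent's expected payoff under `Q` is no lower than under `P`. -/
theorem stmt6
    (T : ℕ) (hT : 3 ≤ T)
    (R I : ℝ) (hR : 1 ≤ R) (hI : 0 < I)
    (φ : ℝ → ℝ)
    (hφc : ContinuousOn φ (Set.Ici 0))
    (hφm : StrictMonoOn φ (Set.Ici 0))
    (hφconv : StrictConvexOn ℝ (Set.Ici 0) φ)
    (hφd : ContDiffOn ℝ 2 φ (Set.Ioi 0))
    (hφ0 : φ 0 = 0)
    (hφtend : Filter.Tendsto (deriv φ) Filter.atTop Filter.atTop)
    (δ1 δ2 q1 q2 : ℝ) (hδ1 : 0 < δ1) (hδ12 : δ1 < δ2)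
    (hq1 : 0 < q1) (hq2 : 0 < q2) (hqsum : q1 + q2 = 1)
    (P : PolicyIV T 2)
    (hP : FeasII T δ1 δ2 q1 q2 φ R I P) :
    ∃ Q : PolicyIV T 2,
      FeasII T δ1 δ2 q1 q2 φ R I Q ∧
      -- the low-type incentive constraints hold with equality
      (∀ t : ℕ, 2 ≤ t → t ≤ T - 1 → ∀ ω ω' : Fin (T - 2) → Fin 2,
        (∀ s : Fin (T - 2), (s : ℕ) + 2 < t → ω s = ω' s) →
        (∀ s : Fin (T - 2), (s : ℕ) + 2 = t → ω s = 0 ∧ ω' s = 1) →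
        Q.v t ω + δ1 * contA T 2 ![δ1, δ2] ![q1, q2] Q.v t ω =
          Q.v t ω' + δ1 * contA T 2 ![δ1, δ2] ![q1, q2] Q.v t ω') ∧
      -- the agent's expected payoff is no lower
      payoffIV T 2 ![δ1, δ2] ![q1, q2] δ1 P ≤
        payoffIV T 2 ![δ1, δ2] ![q1, q2] δ1 Q :=
  stmt6_general T hT R I φ δ1 δ2 q1 q2 hδ1 hδ12 hq1 hq2 hqsum P hP
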